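/- The Praeger–Xu graph PX(4,3) satisfies Dist(PX(4,3)) = 2 and ρ(PX(4,3)) = 3 = ⌈4/3⌉ + 1. -/
import Mathlib


/-- The Praeger–Xu graph `PX(n,k)`: vertices are pairs `(i,x)` with `i : ZMod n` and
`x : Fin k → ZMod 2`; `(i,x)` and `(j,y)` are adjacent iff `j = i+1` and `y t = x (t+1)`
for all `0 ≤ t ≤ k-2`, or symmetrically `i = j+1` and `x t = y (t+1)` for all such `t`. -/
def PX (n k : ℕ) : SimpleGraph (ZMod n × (Fin k → ZMod 2)) :=
  SimpleGraph.fromRel (fun u v =>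
    v.1 = u.1 + 1 ∧ ∀ (t : ℕ) (ht : t + 1 < k),
      v.2 ⟨t, Nat.lt_of_succ_lt ht⟩ = u.2 ⟨t + 1, ht⟩)

/-- `c` is a distinguishing coloring of `G`: the identity is the only automorphism of `G`
preserving the coloring `c`. -/
def IsDistinguishing {V : Type*} {d : ℕ} (G : SimpleGraph V) (c : V → Fin d) : Prop :=
  ∀ φ : G ≃g G, (∀ v, c (φ v) = c v) → ∀ v, φ v = v

/-- The distinguishing number of `G`: the least number of colors in a distinguishing
coloring of `G`. -/
noncomputable def distNum {V : Type*} (G : SimpleGraph V) : ℕ :=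
  sInf {d | ∃ c : V → Fin d, IsDistinguishing G c}

/-- The cost of 2-distinguishing `G`: the minimum cardinality of a set `R` of vertices
such that the identity is the only automorphism of `G` mapping `R` onto itself setwise. -/
noncomputable def cost2 {V : Type*} (G : SimpleGraph V) : ℕ :=
  sInf {m | ∃ R : Set V, R.ncard = m ∧
    ∀ φ : G ≃g G, ⇑φ '' R = R → ∀ v, φ v = v}

abbrev V4 := ZMod 4 × (Fin 3 → ZMod 2)

instance instDecBallPX (k : ℕ) (P : (t : ℕ) → t + 1 < k → Prop)
    [∀ t h, Decidable (P t h)] : Decidable (∀ t (h : t + 1 < k), P t h) :=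
  decidable_of_iff (∀ t (h : t < k - 1), P t (by omega)) (by
    constructor
    · intro H t h; exact H t (by omega)
    · intro H t h; exact H t (by omega))

instance : DecidableRel (PX 4 3).Adj := fun u v => by
  unfold PX
  rw [SimpleGraph.fromRel_adj]
  exact instDecidableAnd

/-- generators -/
def rotF1 : V4 → V4 := fun p => (p.1 + 1, p.2)
def rotF3 : V4 → V4 := fun p => (p.1 + 3, p.2)
def mirF : V4 → V4 := fun p => (-p.1, ![p.2 2, p.2 1, p.2 0])
def flipF (j : ZMod 4) : V4 → V4 :=
  fun p => (p.1, fun t => p.2 t + (if p.1 + (t.val : ZMod 4) = j then 1 else 0))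
def psiF : V4 → V4 := fun p =>
  let x0 := p.2 0; let x1 := p.2 1; let x2 := p.2 2
  if p.1 = 0 then ((if x0 + x2 = 1 then 2 else 0 : ZMod 4), ![x1, x2, x1])
  else if p.1 = 1 then (1 + (if x0 + x2 = 1 then 2 else 0 : ZMod 4), ![x1, x0, x1])
  else if p.1 = 2 then
    (2 + (if x0 + x2 = 1 then 0 else 2 : ZMod 4), ![x0 + x1 + x2 + 1, x0, x0 + x1 + x2])
  else (3 + (if x0 + x2 = 1 then 0 else 2 : ZMod 4), ![x0 + x1 + x2, x2, x0 + x1 + x2 + 1])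

set_option maxHeartbeats 1600000
set_option maxRecDepth 8000
set_option synthInstance.maxSize 2000
set_option synthInstance.maxHeartbeats 1000000

def rotIso1 : PX 4 3 ≃g PX 4 3 :=
  ⟨⟨rotF1, rotF3, by decide, by decide⟩, by decide⟩
def mirIso : PX 4 3 ≃g PX 4 3 :=
  ⟨⟨mirF, mirF, by decide, by decide⟩, by decide⟩
def flipIso (j : ZMod 4) : PX 4 3 ≃g PX 4 3 :=
  ⟨⟨flipF j, flipF j, by revert j; decide, by revert j; decide⟩, by revert j; decide⟩
def psiIso : PX 4 3 ≃g PX 4 3 :=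
  ⟨⟨psiF, psiF, by decide, by decide⟩, by decide⟩


/-- number of common neighbors -/
def cnt (u v : V4) : ℕ :=
  (Finset.univ.filter fun z : V4 => (PX 4 3).Adj u z ∧ (PX 4 3).Adj v z).card

lemma cnt_map (φ : PX 4 3 ≃g PX 4 3) (u v : V4) : cnt (φ u) (φ v) = cnt u v := by
  unfold cnt
  apply Finset.card_bij' (fun z _ => φ.symm z) (fun z _ => φ z)
  · intro z hz
    simp only [Finset.mem_filter, Finset.mem_univ, true_and] at hz ⊢
    refine ⟨?_, ?_⟩
    · have := hz.1
      rw [← φ.apply_symm_apply z] at this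
      exact (φ.map_adj_iff).mp this
    · have := hz.2
      rw [← φ.apply_symm_apply z] at this
      exact (φ.map_adj_iff).mp this
  · intro z hz
    simp only [Finset.mem_filter, Finset.mem_univ, true_and] at hz ⊢
    exact ⟨(φ.map_adj_iff).mpr hz.1, (φ.map_adj_iff).mpr hz.2⟩
  · intro z _; exact φ.apply_symm_apply z
  · intro z _; exact φ.symm_apply_apply z

lemma adj_pres (φ : PX 4 3 ≃g PX 4 3) {u : V4} (hu : φ u = u) (v : V4) :
    (PX 4 3).Adj (φ v) u ↔ (PX 4 3).Adj v u := by
  conv_lhs => rw [← hu]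
  exact φ.map_adj_iff

lemma cnt_pres (φ : PX 4 3 ≃g PX 4 3) {u : V4} (hu : φ u = u) (v : V4) :
    cnt (φ v) u = cnt v u := by
  conv_lhs => rw [← hu]
  exact cnt_map φ v u

lemma fixA2 (φ : PX 4 3 ≃g PX 4 3) (u1 : V4) (h1 : φ u1 = u1) (u2 : V4) (h2 : φ u2 = u2)
    (v : V4)
    (h : ∀ z : V4, (((PX 4 3).Adj z u1 ↔ (PX 4 3).Adj v u1) ∧
      ((PX 4 3).Adj z u2 ↔ (PX 4 3).Adj v u2)) → z = v) :
    φ v = v :=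
  h (φ v) ⟨adj_pres φ h1 v, adj_pres φ h2 v⟩

lemma fixA3 (φ : PX 4 3 ≃g PX 4 3) (u1 : V4) (h1 : φ u1 = u1) (u2 : V4) (h2 : φ u2 = u2)
    (u3 : V4) (h3 : φ u3 = u3) (v : V4)
    (h : ∀ z : V4, (((PX 4 3).Adj z u1 ↔ (PX 4 3).Adj v u1) ∧
      ((PX 4 3).Adj z u2 ↔ (PX 4 3).Adj v u2) ∧
      ((PX 4 3).Adj z u3 ↔ (PX 4 3).Adj v u3)) → z = v) :
    φ v = v :=
  h (φ v) ⟨adj_pres φ h1 v, adj_pres φ h2 v, adj_pres φ h3 v⟩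

lemma fixC2 (φ : PX 4 3 ≃g PX 4 3) (u1 : V4) (h1 : φ u1 = u1) (u2 : V4) (h2 : φ u2 = u2)
    (v : V4)
    (h : ∀ z : V4, (((PX 4 3).Adj z u1 ↔ (PX 4 3).Adj v u1) ∧ cnt z u1 = cnt v u1 ∧
      ((PX 4 3).Adj z u2 ↔ (PX 4 3).Adj v u2) ∧ cnt z u2 = cnt v u2) → z = v) :
    φ v = v :=
  h (φ v) ⟨adj_pres φ h1 v, cnt_pres φ h1 v, adj_pres φ h2 v, cnt_pres φ h2 v⟩

lemma fixC3 (φ : PX 4 3 ≃g PX 4 3) (u1 : V4) (h1 : φ u1 = u1) (u2 : V4) (h2 : φ u2 = u2)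
    (u3 : V4) (h3 : φ u3 = u3) (v : V4)
    (h : ∀ z : V4, (((PX 4 3).Adj z u1 ↔ (PX 4 3).Adj v u1) ∧ cnt z u1 = cnt v u1 ∧
      ((PX 4 3).Adj z u2 ↔ (PX 4 3).Adj v u2) ∧ cnt z u2 = cnt v u2 ∧
      ((PX 4 3).Adj z u3 ↔ (PX 4 3).Adj v u3) ∧ cnt z u3 = cnt v u3) → z = v) :
    φ v = v :=
  h (φ v) ⟨adj_pres φ h1 v, cnt_pres φ h1 v, adj_pres φ h2 v, cnt_pres φ h2 v,
    adj_pres φ h3 v, cnt_pres φ h3 v⟩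

/-- the rigid 3-set -/
def Rset : Set V4 :=
  {((0 : ZMod 4), ![0,0,0]), ((0 : ZMod 4), ![0,0,1]), ((1 : ZMod 4), ![0,0,0])}

lemma rigid (φ : PX 4 3 ≃g PX 4 3) (hR : ⇑φ '' Rset = Rset) : ∀ v, φ v = v := by
  have hmem : ∀ u ∈ Rset, φ u ∈ Rset := by
    intro u hu; rw [← hR]; exact Set.mem_image_of_mem _ hu
  have haR : φ ((0 : ZMod 4), ![0,0,0]) = ((0 : ZMod 4), ![0,0,0]) ∨
      φ ((0 : ZMod 4), ![0,0,0]) = ((0 : ZMod 4), ![0,0,1]) ∨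
      φ ((0 : ZMod 4), ![0,0,0]) = ((1 : ZMod 4), ![0,0,0]) :=
    hmem _ (by left; rfl)
  have hbR : φ ((0 : ZMod 4), ![0,0,1]) = ((0 : ZMod 4), ![0,0,0]) ∨
      φ ((0 : ZMod 4), ![0,0,1]) = ((0 : ZMod 4), ![0,0,1]) ∨
      φ ((0 : ZMod 4), ![0,0,1]) = ((1 : ZMod 4), ![0,0,0]) :=
    hmem _ (by right; left; rfl)
  have hcR : φ ((1 : ZMod 4), ![0,0,0]) = ((0 : ZMod 4), ![0,0,0]) ∨
      φ ((1 : ZMod 4), ![0,0,0]) = ((0 : ZMod 4), ![0,0,1]) ∨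
      φ ((1 : ZMod 4), ![0,0,0]) = ((1 : ZMod 4), ![0,0,0]) :=
    hmem _ (by right; right; rfl)
  have hmap_ac : (PX 4 3).Adj (φ ((0 : ZMod 4), ![0,0,0])) (φ ((1 : ZMod 4), ![0,0,0])) :=
    φ.map_adj_iff.mpr (by decide)
  have hinj := φ.toEquiv.injective
  have hkey : (φ ((0 : ZMod 4), ![0,0,0]) = ((0 : ZMod 4), ![0,0,0]) ∧
      φ ((1 : ZMod 4), ![0,0,0]) = ((1 : ZMod 4), ![0,0,0])) ∨
      (φ ((0 : ZMod 4), ![0,0,0]) = ((1 : ZMod 4), ![0,0,0]) ∧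
      φ ((1 : ZMod 4), ![0,0,0]) = ((0 : ZMod 4), ![0,0,0])) := by
    rcases haR with h1 | h1 | h1 <;> rcases hcR with h2 | h2 | h2 <;>
      rw [h1, h2] at hmap_ac <;>
      first
        | (left; exact ⟨h1, h2⟩)
        | (right; exact ⟨h1, h2⟩)
        | (exact absurd hmap_ac (by decide))
  have hb : φ ((0 : ZMod 4), ![0,0,1]) = ((0 : ZMod 4), ![0,0,1]) := by
    rcases hkey with ⟨h1, h2⟩ | ⟨h1, h2⟩ <;> rcases hbR with h3 | h3 | h3 <;>
      first
        | exact h3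
        | (exact absurd (hinj (h3.trans h1.symm)) (by decide))
        | (exact absurd (hinj (h3.trans h2.symm)) (by decide))
  -- rule out the swap using a common neighbor of a and b
  have ha : φ ((0 : ZMod 4), ![0,0,0]) = ((0 : ZMod 4), ![0,0,0]) := by
    rcases hkey with ⟨h1, _⟩ | ⟨h1, h2⟩
    · exact h1
    · exfalso
      have hw1 : (PX 4 3).Adj (φ ((3 : ZMod 4), ![0,0,0])) (φ ((0 : ZMod 4), ![0,0,0])) :=
        φ.map_adj_iff.mpr (by decide)
      have hw2 : (PX 4 3).Adj (φ ((3 : ZMod 4), ![0,0,0])) (φ ((0 : ZMod 4), ![0,0,1])) :=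
        φ.map_adj_iff.mpr (by decide)
      rw [h1] at hw1
      rw [hb] at hw2
      exact (by decide : ∀ z : V4, ¬ ((PX 4 3).Adj z ((1 : ZMod 4), ![0,0,0]) ∧
        (PX 4 3).Adj z ((0 : ZMod 4), ![0,0,1]))) _ ⟨hw1, hw2⟩
  have hc : φ ((1 : ZMod 4), ![0,0,0]) = ((1 : ZMod 4), ![0,0,0]) := by
    rcases hkey with ⟨_, h2⟩ | ⟨h1, _⟩
    · exact h2
    · exact absurd (ha.symm.trans h1) (by decide)
  have e1 : ∀ z : V4, (((PX 4 3).Adj z ((0 : ZMod 4), ![0,0,0]) ↔ (PX 4 3).Adj ((0 : ZMod 4), ![1,0,0]) ((0 : ZMod 4), ![0,0,0])) ∧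
      cnt z ((0 : ZMod 4), ![0,0,0]) = cnt ((0 : ZMod 4), ![1,0,0]) ((0 : ZMod 4), ![0,0,0]) ∧
      ((PX 4 3).Adj z ((0 : ZMod 4), ![0,0,1]) ↔ (PX 4 3).Adj ((0 : ZMod 4), ![1,0,0]) ((0 : ZMod 4), ![0,0,1])) ∧
      cnt z ((0 : ZMod 4), ![0,0,1]) = cnt ((0 : ZMod 4), ![1,0,0]) ((0 : ZMod 4), ![0,0,1])) →
      z = ((0 : ZMod 4), ![1,0,0]) := by decide
  have h3 : φ ((0 : ZMod 4), ![1,0,0]) = ((0 : ZMod 4), ![1,0,0]) := fixC2 φ ((0 : ZMod 4), ![0,0,0]) ha ((0 : ZMod 4), ![0,0,1]) hb ((0 : ZMod 4), ![1,0,0]) e1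
  have e2 : ∀ z : V4, (((PX 4 3).Adj z ((0 : ZMod 4), ![0,0,0]) ↔ (PX 4 3).Adj ((0 : ZMod 4), ![1,0,1]) ((0 : ZMod 4), ![0,0,0])) ∧
      cnt z ((0 : ZMod 4), ![0,0,0]) = cnt ((0 : ZMod 4), ![1,0,1]) ((0 : ZMod 4), ![0,0,0]) ∧
      ((PX 4 3).Adj z ((0 : ZMod 4), ![0,0,1]) ↔ (PX 4 3).Adj ((0 : ZMod 4), ![1,0,1]) ((0 : ZMod 4), ![0,0,1])) ∧
      cnt z ((0 : ZMod 4), ![0,0,1]) = cnt ((0 : ZMod 4), ![1,0,1]) ((0 : ZMod 4), ![0,0,1])) →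
      z = ((0 : ZMod 4), ![1,0,1]) := by decide
  have h4 : φ ((0 : ZMod 4), ![1,0,1]) = ((0 : ZMod 4), ![1,0,1]) := fixC2 φ ((0 : ZMod 4), ![0,0,0]) ha ((0 : ZMod 4), ![0,0,1]) hb ((0 : ZMod 4), ![1,0,1]) e2
  have e3 : ∀ z : V4, (((PX 4 3).Adj z ((0 : ZMod 4), ![0,0,0]) ↔ (PX 4 3).Adj ((1 : ZMod 4), ![0,0,1]) ((0 : ZMod 4), ![0,0,0])) ∧
      cnt z ((0 : ZMod 4), ![0,0,0]) = cnt ((1 : ZMod 4), ![0,0,1]) ((0 : ZMod 4), ![0,0,0]) ∧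
      ((PX 4 3).Adj z ((0 : ZMod 4), ![0,0,1]) ↔ (PX 4 3).Adj ((1 : ZMod 4), ![0,0,1]) ((0 : ZMod 4), ![0,0,1])) ∧
      cnt z ((0 : ZMod 4), ![0,0,1]) = cnt ((1 : ZMod 4), ![0,0,1]) ((0 : ZMod 4), ![0,0,1]) ∧
      ((PX 4 3).Adj z ((1 : ZMod 4), ![0,0,0]) ↔ (PX 4 3).Adj ((1 : ZMod 4), ![0,0,1]) ((1 : ZMod 4), ![0,0,0])) ∧
      cnt z ((1 : ZMod 4), ![0,0,0]) = cnt ((1 : ZMod 4), ![0,0,1]) ((1 : ZMod 4), ![0,0,0])) →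
      z = ((1 : ZMod 4), ![0,0,1]) := by decide
  have h5 : φ ((1 : ZMod 4), ![0,0,1]) = ((1 : ZMod 4), ![0,0,1]) := fixC3 φ ((0 : ZMod 4), ![0,0,0]) ha ((0 : ZMod 4), ![0,0,1]) hb ((1 : ZMod 4), ![0,0,0]) hc ((1 : ZMod 4), ![0,0,1]) e3
  have e4 : ∀ z : V4, (((PX 4 3).Adj z ((1 : ZMod 4), ![0,0,0]) ↔ (PX 4 3).Adj ((1 : ZMod 4), ![1,0,0]) ((1 : ZMod 4), ![0,0,0])) ∧
      cnt z ((1 : ZMod 4), ![0,0,0]) = cnt ((1 : ZMod 4), ![1,0,0]) ((1 : ZMod 4), ![0,0,0]) ∧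
      ((PX 4 3).Adj z ((1 : ZMod 4), ![0,0,1]) ↔ (PX 4 3).Adj ((1 : ZMod 4), ![1,0,0]) ((1 : ZMod 4), ![0,0,1])) ∧
      cnt z ((1 : ZMod 4), ![0,0,1]) = cnt ((1 : ZMod 4), ![1,0,0]) ((1 : ZMod 4), ![0,0,1])) →
      z = ((1 : ZMod 4), ![1,0,0]) := by decide
  have h6 : φ ((1 : ZMod 4), ![1,0,0]) = ((1 : ZMod 4), ![1,0,0]) := fixC2 φ ((1 : ZMod 4), ![0,0,0]) hc ((1 : ZMod 4), ![0,0,1]) h5 ((1 : ZMod 4), ![1,0,0]) e4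
  have e5 : ∀ z : V4, (((PX 4 3).Adj z ((1 : ZMod 4), ![0,0,0]) ↔ (PX 4 3).Adj ((1 : ZMod 4), ![1,0,1]) ((1 : ZMod 4), ![0,0,0])) ∧
      cnt z ((1 : ZMod 4), ![0,0,0]) = cnt ((1 : ZMod 4), ![1,0,1]) ((1 : ZMod 4), ![0,0,0]) ∧
      ((PX 4 3).Adj z ((1 : ZMod 4), ![0,0,1]) ↔ (PX 4 3).Adj ((1 : ZMod 4), ![1,0,1]) ((1 : ZMod 4), ![0,0,1])) ∧
      cnt z ((1 : ZMod 4), ![0,0,1]) = cnt ((1 : ZMod 4), ![1,0,1]) ((1 : ZMod 4), ![0,0,1])) →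
      z = ((1 : ZMod 4), ![1,0,1]) := by decide
  have h7 : φ ((1 : ZMod 4), ![1,0,1]) = ((1 : ZMod 4), ![1,0,1]) := fixC2 φ ((1 : ZMod 4), ![0,0,0]) hc ((1 : ZMod 4), ![0,0,1]) h5 ((1 : ZMod 4), ![1,0,1]) e5
  have e6 : ∀ z : V4, (((PX 4 3).Adj z ((0 : ZMod 4), ![0,0,0]) ↔ (PX 4 3).Adj ((2 : ZMod 4), ![0,0,0]) ((0 : ZMod 4), ![0,0,0])) ∧
      cnt z ((0 : ZMod 4), ![0,0,0]) = cnt ((2 : ZMod 4), ![0,0,0]) ((0 : ZMod 4), ![0,0,0]) ∧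
      ((PX 4 3).Adj z ((1 : ZMod 4), ![1,0,0]) ↔ (PX 4 3).Adj ((2 : ZMod 4), ![0,0,0]) ((1 : ZMod 4), ![1,0,0])) ∧
      cnt z ((1 : ZMod 4), ![1,0,0]) = cnt ((2 : ZMod 4), ![0,0,0]) ((1 : ZMod 4), ![1,0,0])) →
      z = ((2 : ZMod 4), ![0,0,0]) := by decide
  have h8 : φ ((2 : ZMod 4), ![0,0,0]) = ((2 : ZMod 4), ![0,0,0]) := fixC2 φ ((0 : ZMod 4), ![0,0,0]) ha ((1 : ZMod 4), ![1,0,0]) h6 ((2 : ZMod 4), ![0,0,0]) e6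
  have e7 : ∀ z : V4, (((PX 4 3).Adj z ((0 : ZMod 4), ![0,0,1]) ↔ (PX 4 3).Adj ((3 : ZMod 4), ![0,0,0]) ((0 : ZMod 4), ![0,0,1])) ∧
      ((PX 4 3).Adj z ((2 : ZMod 4), ![0,0,0]) ↔ (PX 4 3).Adj ((3 : ZMod 4), ![0,0,0]) ((2 : ZMod 4), ![0,0,0]))) →
      z = ((3 : ZMod 4), ![0,0,0]) := by decide
  have h9 : φ ((3 : ZMod 4), ![0,0,0]) = ((3 : ZMod 4), ![0,0,0]) := fixA2 φ ((0 : ZMod 4), ![0,0,1]) hb ((2 : ZMod 4), ![0,0,0]) h8 ((3 : ZMod 4), ![0,0,0]) e7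
  have e8 : ∀ z : V4, (((PX 4 3).Adj z ((0 : ZMod 4), ![0,0,0]) ↔ (PX 4 3).Adj ((3 : ZMod 4), ![1,0,0]) ((0 : ZMod 4), ![0,0,0])) ∧
      ((PX 4 3).Adj z ((0 : ZMod 4), ![0,0,1]) ↔ (PX 4 3).Adj ((3 : ZMod 4), ![1,0,0]) ((0 : ZMod 4), ![0,0,1])) ∧
      ((PX 4 3).Adj z ((2 : ZMod 4), ![0,0,0]) ↔ (PX 4 3).Adj ((3 : ZMod 4), ![1,0,0]) ((2 : ZMod 4), ![0,0,0]))) →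
      z = ((3 : ZMod 4), ![1,0,0]) := by decide
  have h10 : φ ((3 : ZMod 4), ![1,0,0]) = ((3 : ZMod 4), ![1,0,0]) := fixA3 φ ((0 : ZMod 4), ![0,0,0]) ha ((0 : ZMod 4), ![0,0,1]) hb ((2 : ZMod 4), ![0,0,0]) h8 ((3 : ZMod 4), ![1,0,0]) e8
  have e9 : ∀ z : V4, (((PX 4 3).Adj z ((1 : ZMod 4), ![0,0,0]) ↔ (PX 4 3).Adj ((2 : ZMod 4), ![0,0,1]) ((1 : ZMod 4), ![0,0,0])) ∧
      ((PX 4 3).Adj z ((1 : ZMod 4), ![0,0,1]) ↔ (PX 4 3).Adj ((2 : ZMod 4), ![0,0,1]) ((1 : ZMod 4), ![0,0,1])) ∧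
      ((PX 4 3).Adj z ((3 : ZMod 4), ![0,0,0]) ↔ (PX 4 3).Adj ((2 : ZMod 4), ![0,0,1]) ((3 : ZMod 4), ![0,0,0]))) →
      z = ((2 : ZMod 4), ![0,0,1]) := by decide
  have h11 : φ ((2 : ZMod 4), ![0,0,1]) = ((2 : ZMod 4), ![0,0,1]) := fixA3 φ ((1 : ZMod 4), ![0,0,0]) hc ((1 : ZMod 4), ![0,0,1]) h5 ((3 : ZMod 4), ![0,0,0]) h9 ((2 : ZMod 4), ![0,0,1]) e9
  have e10 : ∀ z : V4, (((PX 4 3).Adj z ((1 : ZMod 4), ![1,0,1]) ↔ (PX 4 3).Adj ((2 : ZMod 4), ![0,1,0]) ((1 : ZMod 4), ![1,0,1])) ∧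
      ((PX 4 3).Adj z ((3 : ZMod 4), ![1,0,0]) ↔ (PX 4 3).Adj ((2 : ZMod 4), ![0,1,0]) ((3 : ZMod 4), ![1,0,0]))) →
      z = ((2 : ZMod 4), ![0,1,0]) := by decide
  have h12 : φ ((2 : ZMod 4), ![0,1,0]) = ((2 : ZMod 4), ![0,1,0]) := fixA2 φ ((1 : ZMod 4), ![1,0,1]) h7 ((3 : ZMod 4), ![1,0,0]) h10 ((2 : ZMod 4), ![0,1,0]) e10
  have e11 : ∀ z : V4, (((PX 4 3).Adj z ((1 : ZMod 4), ![0,0,0]) ↔ (PX 4 3).Adj ((2 : ZMod 4), ![0,1,1]) ((1 : ZMod 4), ![0,0,0])) ∧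
      ((PX 4 3).Adj z ((1 : ZMod 4), ![0,0,1]) ↔ (PX 4 3).Adj ((2 : ZMod 4), ![0,1,1]) ((1 : ZMod 4), ![0,0,1])) ∧
      ((PX 4 3).Adj z ((3 : ZMod 4), ![1,0,0]) ↔ (PX 4 3).Adj ((2 : ZMod 4), ![0,1,1]) ((3 : ZMod 4), ![1,0,0]))) →
      z = ((2 : ZMod 4), ![0,1,1]) := by decide
  have h13 : φ ((2 : ZMod 4), ![0,1,1]) = ((2 : ZMod 4), ![0,1,1]) := fixA3 φ ((1 : ZMod 4), ![0,0,0]) hc ((1 : ZMod 4), ![0,0,1]) h5 ((3 : ZMod 4), ![1,0,0]) h10 ((2 : ZMod 4), ![0,1,1]) e11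
  have e12 : ∀ z : V4, (((PX 4 3).Adj z ((1 : ZMod 4), ![0,0,0]) ↔ (PX 4 3).Adj ((2 : ZMod 4), ![1,0,0]) ((1 : ZMod 4), ![0,0,0])) ∧
      ((PX 4 3).Adj z ((3 : ZMod 4), ![0,0,0]) ↔ (PX 4 3).Adj ((2 : ZMod 4), ![1,0,0]) ((3 : ZMod 4), ![0,0,0])) ∧
      ((PX 4 3).Adj z ((3 : ZMod 4), ![1,0,0]) ↔ (PX 4 3).Adj ((2 : ZMod 4), ![1,0,0]) ((3 : ZMod 4), ![1,0,0]))) →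
      z = ((2 : ZMod 4), ![1,0,0]) := by decide
  have h14 : φ ((2 : ZMod 4), ![1,0,0]) = ((2 : ZMod 4), ![1,0,0]) := fixA3 φ ((1 : ZMod 4), ![0,0,0]) hc ((3 : ZMod 4), ![0,0,0]) h9 ((3 : ZMod 4), ![1,0,0]) h10 ((2 : ZMod 4), ![1,0,0]) e12
  have e13 : ∀ z : V4, (((PX 4 3).Adj z ((1 : ZMod 4), ![0,0,1]) ↔ (PX 4 3).Adj ((2 : ZMod 4), ![1,1,0]) ((1 : ZMod 4), ![0,0,1])) ∧
      ((PX 4 3).Adj z ((3 : ZMod 4), ![0,0,0]) ↔ (PX 4 3).Adj ((2 : ZMod 4), ![1,1,0]) ((3 : ZMod 4), ![0,0,0])) ∧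
      ((PX 4 3).Adj z ((3 : ZMod 4), ![1,0,0]) ↔ (PX 4 3).Adj ((2 : ZMod 4), ![1,1,0]) ((3 : ZMod 4), ![1,0,0]))) →
      z = ((2 : ZMod 4), ![1,1,0]) := by decide
  have h15 : φ ((2 : ZMod 4), ![1,1,0]) = ((2 : ZMod 4), ![1,1,0]) := fixA3 φ ((1 : ZMod 4), ![0,0,1]) h5 ((3 : ZMod 4), ![0,0,0]) h9 ((3 : ZMod 4), ![1,0,0]) h10 ((2 : ZMod 4), ![1,1,0]) e13
  have e14 : ∀ z : V4, (((PX 4 3).Adj z ((0 : ZMod 4), ![0,0,0]) ↔ (PX 4 3).Adj ((3 : ZMod 4), ![0,0,1]) ((0 : ZMod 4), ![0,0,0])) ∧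
      ((PX 4 3).Adj z ((2 : ZMod 4), ![0,0,0]) ↔ (PX 4 3).Adj ((3 : ZMod 4), ![0,0,1]) ((2 : ZMod 4), ![0,0,0])) ∧
      ((PX 4 3).Adj z ((2 : ZMod 4), ![0,0,1]) ↔ (PX 4 3).Adj ((3 : ZMod 4), ![0,0,1]) ((2 : ZMod 4), ![0,0,1]))) →
      z = ((3 : ZMod 4), ![0,0,1]) := by decide
  have h16 : φ ((3 : ZMod 4), ![0,0,1]) = ((3 : ZMod 4), ![0,0,1]) := fixA3 φ ((0 : ZMod 4), ![0,0,0]) ha ((2 : ZMod 4), ![0,0,0]) h8 ((2 : ZMod 4), ![0,0,1]) h11 ((3 : ZMod 4), ![0,0,1]) e14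
  have e15 : ∀ z : V4, (((PX 4 3).Adj z ((0 : ZMod 4), ![1,0,1]) ↔ (PX 4 3).Adj ((3 : ZMod 4), ![0,1,0]) ((0 : ZMod 4), ![1,0,1])) ∧
      ((PX 4 3).Adj z ((2 : ZMod 4), ![0,0,1]) ↔ (PX 4 3).Adj ((3 : ZMod 4), ![0,1,0]) ((2 : ZMod 4), ![0,0,1]))) →
      z = ((3 : ZMod 4), ![0,1,0]) := by decide
  have h17 : φ ((3 : ZMod 4), ![0,1,0]) = ((3 : ZMod 4), ![0,1,0]) := fixA2 φ ((0 : ZMod 4), ![1,0,1]) h4 ((2 : ZMod 4), ![0,0,1]) h11 ((3 : ZMod 4), ![0,1,0]) e15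
  have e16 : ∀ z : V4, (((PX 4 3).Adj z ((0 : ZMod 4), ![1,0,0]) ↔ (PX 4 3).Adj ((3 : ZMod 4), ![0,1,1]) ((0 : ZMod 4), ![1,0,0])) ∧
      ((PX 4 3).Adj z ((2 : ZMod 4), ![0,0,0]) ↔ (PX 4 3).Adj ((3 : ZMod 4), ![0,1,1]) ((2 : ZMod 4), ![0,0,0])) ∧
      ((PX 4 3).Adj z ((2 : ZMod 4), ![0,0,1]) ↔ (PX 4 3).Adj ((3 : ZMod 4), ![0,1,1]) ((2 : ZMod 4), ![0,0,1]))) →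
      z = ((3 : ZMod 4), ![0,1,1]) := by decide
  have h18 : φ ((3 : ZMod 4), ![0,1,1]) = ((3 : ZMod 4), ![0,1,1]) := fixA3 φ ((0 : ZMod 4), ![1,0,0]) h3 ((2 : ZMod 4), ![0,0,0]) h8 ((2 : ZMod 4), ![0,0,1]) h11 ((3 : ZMod 4), ![0,1,1]) e16
  have e17 : ∀ z : V4, (((PX 4 3).Adj z ((0 : ZMod 4), ![0,0,0]) ↔ (PX 4 3).Adj ((3 : ZMod 4), ![1,0,1]) ((0 : ZMod 4), ![0,0,0])) ∧
      ((PX 4 3).Adj z ((2 : ZMod 4), ![0,1,0]) ↔ (PX 4 3).Adj ((3 : ZMod 4), ![1,0,1]) ((2 : ZMod 4), ![0,1,0])) ∧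
      ((PX 4 3).Adj z ((2 : ZMod 4), ![0,1,1]) ↔ (PX 4 3).Adj ((3 : ZMod 4), ![1,0,1]) ((2 : ZMod 4), ![0,1,1]))) →
      z = ((3 : ZMod 4), ![1,0,1]) := by decide
  have h19 : φ ((3 : ZMod 4), ![1,0,1]) = ((3 : ZMod 4), ![1,0,1]) := fixA3 φ ((0 : ZMod 4), ![0,0,0]) ha ((2 : ZMod 4), ![0,1,0]) h12 ((2 : ZMod 4), ![0,1,1]) h13 ((3 : ZMod 4), ![1,0,1]) e17
  have e18 : ∀ z : V4, (((PX 4 3).Adj z ((0 : ZMod 4), ![1,0,1]) ↔ (PX 4 3).Adj ((3 : ZMod 4), ![1,1,0]) ((0 : ZMod 4), ![1,0,1])) ∧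
      ((PX 4 3).Adj z ((2 : ZMod 4), ![0,1,1]) ↔ (PX 4 3).Adj ((3 : ZMod 4), ![1,1,0]) ((2 : ZMod 4), ![0,1,1]))) →
      z = ((3 : ZMod 4), ![1,1,0]) := by decide
  have h20 : φ ((3 : ZMod 4), ![1,1,0]) = ((3 : ZMod 4), ![1,1,0]) := fixA2 φ ((0 : ZMod 4), ![1,0,1]) h4 ((2 : ZMod 4), ![0,1,1]) h13 ((3 : ZMod 4), ![1,1,0]) e18
  have e19 : ∀ z : V4, (((PX 4 3).Adj z ((0 : ZMod 4), ![1,0,0]) ↔ (PX 4 3).Adj ((3 : ZMod 4), ![1,1,1]) ((0 : ZMod 4), ![1,0,0])) ∧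
      ((PX 4 3).Adj z ((2 : ZMod 4), ![0,1,0]) ↔ (PX 4 3).Adj ((3 : ZMod 4), ![1,1,1]) ((2 : ZMod 4), ![0,1,0])) ∧
      ((PX 4 3).Adj z ((2 : ZMod 4), ![0,1,1]) ↔ (PX 4 3).Adj ((3 : ZMod 4), ![1,1,1]) ((2 : ZMod 4), ![0,1,1]))) →
      z = ((3 : ZMod 4), ![1,1,1]) := by decide
  have h21 : φ ((3 : ZMod 4), ![1,1,1]) = ((3 : ZMod 4), ![1,1,1]) := fixA3 φ ((0 : ZMod 4), ![1,0,0]) h3 ((2 : ZMod 4), ![0,1,0]) h12 ((2 : ZMod 4), ![0,1,1]) h13 ((3 : ZMod 4), ![1,1,1]) e19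
  have e20 : ∀ z : V4, (((PX 4 3).Adj z ((1 : ZMod 4), ![1,0,0]) ↔ (PX 4 3).Adj ((0 : ZMod 4), ![0,1,0]) ((1 : ZMod 4), ![1,0,0])) ∧
      ((PX 4 3).Adj z ((3 : ZMod 4), ![1,0,1]) ↔ (PX 4 3).Adj ((0 : ZMod 4), ![0,1,0]) ((3 : ZMod 4), ![1,0,1]))) →
      z = ((0 : ZMod 4), ![0,1,0]) := by decide
  have h22 : φ ((0 : ZMod 4), ![0,1,0]) = ((0 : ZMod 4), ![0,1,0]) := fixA2 φ ((1 : ZMod 4), ![1,0,0]) h6 ((3 : ZMod 4), ![1,0,1]) h19 ((0 : ZMod 4), ![0,1,0]) e20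
  have e21 : ∀ z : V4, (((PX 4 3).Adj z ((1 : ZMod 4), ![1,0,0]) ↔ (PX 4 3).Adj ((0 : ZMod 4), ![0,1,1]) ((1 : ZMod 4), ![1,0,0])) ∧
      ((PX 4 3).Adj z ((3 : ZMod 4), ![0,0,0]) ↔ (PX 4 3).Adj ((0 : ZMod 4), ![0,1,1]) ((3 : ZMod 4), ![0,0,0])) ∧
      ((PX 4 3).Adj z ((3 : ZMod 4), ![0,0,1]) ↔ (PX 4 3).Adj ((0 : ZMod 4), ![0,1,1]) ((3 : ZMod 4), ![0,0,1]))) →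
      z = ((0 : ZMod 4), ![0,1,1]) := by decide
  have h23 : φ ((0 : ZMod 4), ![0,1,1]) = ((0 : ZMod 4), ![0,1,1]) := fixA3 φ ((1 : ZMod 4), ![1,0,0]) h6 ((3 : ZMod 4), ![0,0,0]) h9 ((3 : ZMod 4), ![0,0,1]) h16 ((0 : ZMod 4), ![0,1,1]) e21
  have e22 : ∀ z : V4, (((PX 4 3).Adj z ((1 : ZMod 4), ![1,0,0]) ↔ (PX 4 3).Adj ((0 : ZMod 4), ![1,1,0]) ((1 : ZMod 4), ![1,0,0])) ∧
      ((PX 4 3).Adj z ((3 : ZMod 4), ![1,1,1]) ↔ (PX 4 3).Adj ((0 : ZMod 4), ![1,1,0]) ((3 : ZMod 4), ![1,1,1]))) →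
      z = ((0 : ZMod 4), ![1,1,0]) := by decide
  have h24 : φ ((0 : ZMod 4), ![1,1,0]) = ((0 : ZMod 4), ![1,1,0]) := fixA2 φ ((1 : ZMod 4), ![1,0,0]) h6 ((3 : ZMod 4), ![1,1,1]) h21 ((0 : ZMod 4), ![1,1,0]) e22
  have e23 : ∀ z : V4, (((PX 4 3).Adj z ((1 : ZMod 4), ![1,0,0]) ↔ (PX 4 3).Adj ((0 : ZMod 4), ![1,1,1]) ((1 : ZMod 4), ![1,0,0])) ∧
      ((PX 4 3).Adj z ((3 : ZMod 4), ![0,1,0]) ↔ (PX 4 3).Adj ((0 : ZMod 4), ![1,1,1]) ((3 : ZMod 4), ![0,1,0])) ∧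
      ((PX 4 3).Adj z ((3 : ZMod 4), ![0,1,1]) ↔ (PX 4 3).Adj ((0 : ZMod 4), ![1,1,1]) ((3 : ZMod 4), ![0,1,1]))) →
      z = ((0 : ZMod 4), ![1,1,1]) := by decide
  have h25 : φ ((0 : ZMod 4), ![1,1,1]) = ((0 : ZMod 4), ![1,1,1]) := fixA3 φ ((1 : ZMod 4), ![1,0,0]) h6 ((3 : ZMod 4), ![0,1,0]) h17 ((3 : ZMod 4), ![0,1,1]) h18 ((0 : ZMod 4), ![1,1,1]) e23
  have e24 : ∀ z : V4, (((PX 4 3).Adj z ((0 : ZMod 4), ![1,0,1]) ↔ (PX 4 3).Adj ((1 : ZMod 4), ![0,1,0]) ((0 : ZMod 4), ![1,0,1])) ∧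
      ((PX 4 3).Adj z ((2 : ZMod 4), ![1,0,0]) ↔ (PX 4 3).Adj ((1 : ZMod 4), ![0,1,0]) ((2 : ZMod 4), ![1,0,0]))) →
      z = ((1 : ZMod 4), ![0,1,0]) := by decide
  have h26 : φ ((1 : ZMod 4), ![0,1,0]) = ((1 : ZMod 4), ![0,1,0]) := fixA2 φ ((0 : ZMod 4), ![1,0,1]) h4 ((2 : ZMod 4), ![1,0,0]) h14 ((1 : ZMod 4), ![0,1,0]) e24
  have e25 : ∀ z : V4, (((PX 4 3).Adj z ((0 : ZMod 4), ![1,0,1]) ↔ (PX 4 3).Adj ((1 : ZMod 4), ![0,1,1]) ((0 : ZMod 4), ![1,0,1])) ∧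
      ((PX 4 3).Adj z ((2 : ZMod 4), ![1,1,0]) ↔ (PX 4 3).Adj ((1 : ZMod 4), ![0,1,1]) ((2 : ZMod 4), ![1,1,0]))) →
      z = ((1 : ZMod 4), ![0,1,1]) := by decide
  have h27 : φ ((1 : ZMod 4), ![0,1,1]) = ((1 : ZMod 4), ![0,1,1]) := fixA2 φ ((0 : ZMod 4), ![1,0,1]) h4 ((2 : ZMod 4), ![1,1,0]) h15 ((1 : ZMod 4), ![0,1,1]) e25
  have e26 : ∀ z : V4, (((PX 4 3).Adj z ((2 : ZMod 4), ![1,0,0]) ↔ (PX 4 3).Adj ((1 : ZMod 4), ![1,1,0]) ((2 : ZMod 4), ![1,0,0])) ∧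
      ((PX 4 3).Adj z ((0 : ZMod 4), ![1,1,1]) ↔ (PX 4 3).Adj ((1 : ZMod 4), ![1,1,0]) ((0 : ZMod 4), ![1,1,1]))) →
      z = ((1 : ZMod 4), ![1,1,0]) := by decide
  have h28 : φ ((1 : ZMod 4), ![1,1,0]) = ((1 : ZMod 4), ![1,1,0]) := fixA2 φ ((2 : ZMod 4), ![1,0,0]) h14 ((0 : ZMod 4), ![1,1,1]) h25 ((1 : ZMod 4), ![1,1,0]) e26
  have e27 : ∀ z : V4, (((PX 4 3).Adj z ((2 : ZMod 4), ![1,1,0]) ↔ (PX 4 3).Adj ((1 : ZMod 4), ![1,1,1]) ((2 : ZMod 4), ![1,1,0])) ∧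
      ((PX 4 3).Adj z ((0 : ZMod 4), ![1,1,1]) ↔ (PX 4 3).Adj ((1 : ZMod 4), ![1,1,1]) ((0 : ZMod 4), ![1,1,1]))) →
      z = ((1 : ZMod 4), ![1,1,1]) := by decide
  have h29 : φ ((1 : ZMod 4), ![1,1,1]) = ((1 : ZMod 4), ![1,1,1]) := fixA2 φ ((2 : ZMod 4), ![1,1,0]) h15 ((0 : ZMod 4), ![1,1,1]) h25 ((1 : ZMod 4), ![1,1,1]) e27
  have e28 : ∀ z : V4, (((PX 4 3).Adj z ((3 : ZMod 4), ![0,1,0]) ↔ (PX 4 3).Adj ((2 : ZMod 4), ![1,0,1]) ((3 : ZMod 4), ![0,1,0])) ∧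
      ((PX 4 3).Adj z ((1 : ZMod 4), ![1,1,0]) ↔ (PX 4 3).Adj ((2 : ZMod 4), ![1,0,1]) ((1 : ZMod 4), ![1,1,0]))) →
      z = ((2 : ZMod 4), ![1,0,1]) := by decide
  have h30 : φ ((2 : ZMod 4), ![1,0,1]) = ((2 : ZMod 4), ![1,0,1]) := fixA2 φ ((3 : ZMod 4), ![0,1,0]) h17 ((1 : ZMod 4), ![1,1,0]) h28 ((2 : ZMod 4), ![1,0,1]) e28
  have e29 : ∀ z : V4, (((PX 4 3).Adj z ((3 : ZMod 4), ![1,1,0]) ↔ (PX 4 3).Adj ((2 : ZMod 4), ![1,1,1]) ((3 : ZMod 4), ![1,1,0])) ∧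
      ((PX 4 3).Adj z ((1 : ZMod 4), ![1,1,1]) ↔ (PX 4 3).Adj ((2 : ZMod 4), ![1,1,1]) ((1 : ZMod 4), ![1,1,1]))) →
      z = ((2 : ZMod 4), ![1,1,1]) := by decide
  have h31 : φ ((2 : ZMod 4), ![1,1,1]) = ((2 : ZMod 4), ![1,1,1]) := fixA2 φ ((3 : ZMod 4), ![1,1,0]) h20 ((1 : ZMod 4), ![1,1,1]) h29 ((2 : ZMod 4), ![1,1,1]) e29
  intro v
  have hall : ∀ w : V4, w = ((0 : ZMod 4), ![0,0,0]) ∨ w = ((0 : ZMod 4), ![0,0,1]) ∨ w = ((0 : ZMod 4), ![0,1,0]) ∨ w = ((0 : ZMod 4), ![0,1,1]) ∨ w = ((0 : ZMod 4), ![1,0,0]) ∨ w = ((0 : ZMod 4), ![1,0,1]) ∨ w = ((0 : ZMod 4), ![1,1,0]) ∨ w = ((0 : ZMod 4), ![1,1,1]) ∨ w = ((1 : ZMod 4), ![0,0,0]) ∨ w = ((1 : ZMod 4), ![0,0,1]) ∨ w = ((1 : ZMod 4), ![0,1,0]) ∨ w = ((1 : ZMod 4), ![0,1,1]) ∨ w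 = ((1 : ZMod 4), ![1,0,0]) ∨ w = ((1 : ZMod 4), ![1,0,1]) ∨ w = ((1 : ZMod 4), ![1,1,0]) ∨ w = ((1 : ZMod 4), ![1,1,1]) ∨ w = ((2 : ZMod 4), ![0,0,0]) ∨ w = ((2 : ZMod 4), ![0,0,1]) ∨ w = ((2 : ZMod 4), ![0,1,0]) ∨ w = ((2 : ZMod 4), ![0,1,1]) ∨ w = ((2 : ZMod 4), ![1,0,0]) ∨ w = ((2 : ZMod 4), ![1,0,1]) ∨ w = ((2 : ZMod 4), ![1,1,0]) ∨ w = ((2 : ZMod 4), ![1,1,1]) ∨ w = ((3 : ZMod 4), ![0,0,0]) ∨ w = ((3 : ZMod 4), ![0,0,1]) ∨ w = ((3 : ZMod 4), ![0,1,0]) ∨ w = ((3 : ZMod 4), ![0,1,1]) ∨ w = ((3 : ZMod 4), ![1,0,0]) ∨ w = ((3 : ZMod 4), ![1,0,1]) ∨ w = ((3 : ZMod 4), ![1,1,0]) ∨ w = ((3 : ZMod 4), ![1,1,1]) := by decide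
  rcases hall v with h|h|h|h|h|h|h|h|h|h|h|h|h|h|h|h|h|h|h|h|h|h|h|h|h|h|h|h|h|h|h|h <;> rw [h]
  all_goals first | exact ha | exact hb | exact hc | exact h3 | exact h4 | exact h5 | exact h6 | exact h7 | exact h8 | exact h9 | exact h10 | exact h11 | exact h12 | exact h13 | exact h14 | exact h15 | exact h16 | exact h17 | exact h18 | exact h19 | exact h20 | exact h21 | exact h22 | exact h23 | exact h24 | exact h25 | exact h26 | exact h27 | exact h28 | exact h29 | exact h30 | exact h31

def memF : Fin 30 → V4 → V4 := fun n x =>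
  match n with
  | 0 => flipF 0 (x)
  | 1 => flipF 1 (x)
  | 2 => flipF 2 (x)
  | 3 => flipF 3 (x)
  | 4 => psiF (x)
  | 5 => flipF 3 (flipF 0 (rotF1 (rotF1 (psiF (x)))))
  | 6 => flipF 2 (flipF 1 (rotF1 (rotF1 (psiF (x)))))
  | 7 => flipF 3 (flipF 2 (flipF 1 (flipF 0 (psiF (x)))))
  | 8 => mirF (x)
  | 9 => flipF 2 (flipF 0 (mirF (x)))
  | 10 => rotF1 (rotF1 (rotF1 (mirF (x))))
  | 11 => flipF 0 (rotF1 (rotF1 (rotF1 (psiF (x)))))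
  | 12 => flipF 3 (rotF1 (psiF (x)))
  | 13 => flipF 2 (flipF 1 (flipF 0 (rotF1 (psiF (x)))))
  | 14 => flipF 3 (flipF 2 (flipF 1 (rotF1 (rotF1 (rotF1 (psiF (x)))))))
  | 15 => flipF 3 (flipF 2 (flipF 1 (flipF 0 (rotF1 (rotF1 (rotF1 (mirF (x))))))))
  | 16 => rotF1 (mirF (psiF (x)))
  | 17 => rotF1 (rotF1 (mirF (x)))
  | 18 => flipF 1 (rotF1 (psiF (x)))
  | 19 => flipF 2 (rotF1 (rotF1 (rotF1 (psiF (x)))))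
  | 20 => flipF 1 (flipF 0 (rotF1 (rotF1 (rotF1 (mirF (psiF (x)))))))
  | 21 => flipF 2 (flipF 0 (rotF1 (mirF (psiF (x)))))
  | 22 => flipF 3 (flipF 0 (rotF1 (rotF1 (rotF1 (mirF (psiF (x)))))))
  | 23 => flipF 2 (flipF 1 (rotF1 (rotF1 (rotF1 (mirF (psiF (x)))))))
  | 24 => flipF 3 (flipF 1 (rotF1 (mirF (psiF (x)))))
  | 25 => flipF 3 (flipF 1 (rotF1 (rotF1 (mirF (x)))))
  | 26 => flipF 3 (flipF 2 (rotF1 (rotF1 (rotF1 (mirF (psiF (x)))))))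
  | 27 => flipF 3 (flipF 1 (flipF 0 (rotF1 (rotF1 (rotF1 (psiF (x)))))))
  | 28 => flipF 3 (flipF 2 (flipF 0 (rotF1 (psiF (x)))))
  | _ => flipF 3 (flipF 2 (flipF 1 (flipF 0 (rotF1 (mirF (psiF (x)))))))

def memIso : Fin 30 → (PX 4 3 ≃g PX 4 3) := fun n =>
  match n with
  | 0 => (flipIso 0)
  | 1 => (flipIso 1)
  | 2 => (flipIso 2)
  | 3 => (flipIso 3)
  | 4 => psiIso
  | 5 => ((((psiIso.trans rotIso1).trans rotIso1).trans (flipIso 0)).trans (flipIso 3))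
  | 6 => ((((psiIso.trans rotIso1).trans rotIso1).trans (flipIso 1)).trans (flipIso 2))
  | 7 => ((((psiIso.trans (flipIso 0)).trans (flipIso 1)).trans (flipIso 2)).trans (flipIso 3))
  | 8 => mirIso
  | 9 => ((mirIso.trans (flipIso 0)).trans (flipIso 2))
  | 10 => (((mirIso.trans rotIso1).trans rotIso1).trans rotIso1)
  | 11 => ((((psiIso.trans rotIso1).trans rotIso1).trans rotIso1).trans (flipIso 0))
  | 12 => ((psiIso.trans rotIso1).trans (flipIso 3))
  | 13 => ((((psiIso.trans rotIso1).trans (flipIso 0)).trans (flipIso 1)).trans (flipIso 2))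
  | 14 => ((((((psiIso.trans rotIso1).trans rotIso1).trans rotIso1).trans (flipIso 1)).trans (flipIso 2)).trans (flipIso 3))
  | 15 => (((((((mirIso.trans rotIso1).trans rotIso1).trans rotIso1).trans (flipIso 0)).trans (flipIso 1)).trans (flipIso 2)).trans (flipIso 3))
  | 16 => ((psiIso.trans mirIso).trans rotIso1)
  | 17 => ((mirIso.trans rotIso1).trans rotIso1)
  | 18 => ((psiIso.trans rotIso1).trans (flipIso 1))
  | 19 => ((((psiIso.trans rotIso1).trans rotIso1).trans rotIso1).trans (flipIso 2))
  | 20 => ((((((psiIso.trans mirIso).trans rotIso1).trans rotIso1).trans rotIso1).trans (flipIso 0)).trans (flipIso 1))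
  | 21 => ((((psiIso.trans mirIso).trans rotIso1).trans (flipIso 0)).trans (flipIso 2))
  | 22 => ((((((psiIso.trans mirIso).trans rotIso1).trans rotIso1).trans rotIso1).trans (flipIso 0)).trans (flipIso 3))
  | 23 => ((((((psiIso.trans mirIso).trans rotIso1).trans rotIso1).trans rotIso1).trans (flipIso 1)).trans (flipIso 2))
  | 24 => ((((psiIso.trans mirIso).trans rotIso1).trans (flipIso 1)).trans (flipIso 3))
  | 25 => ((((mirIso.trans rotIso1).trans rotIso1).trans (flipIso 1)).trans (flipIso 3))
  | 26 => ((((((psiIso.trans mirIso).trans rotIso1).trans rotIso1).trans rotIso1).trans (flipIso 2)).trans (flipIso 3))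
  | 27 => ((((((psiIso.trans rotIso1).trans rotIso1).trans rotIso1).trans (flipIso 0)).trans (flipIso 1)).trans (flipIso 3))
  | 28 => ((((psiIso.trans rotIso1).trans (flipIso 0)).trans (flipIso 2)).trans (flipIso 3))
  | _ => ((((((psiIso.trans mirIso).trans rotIso1).trans (flipIso 0)).trans (flipIso 1)).trans (flipIso 2)).trans (flipIso 3))
lemma memIso_coe : ∀ (n : Fin 30) (x : V4), memIso n x = memF n x := by
  intro n x
  fin_cases n <;> rfl

lemma mem_nontrivial : ∀ n : Fin 30, ∃ w : V4, memF n w ≠ w := by decide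

lemma mem_cover : ∀ u v : V4, ∃ n : Fin 30,
    (memF n u = u ∧ memF n v = v) ∨ (memF n u = v ∧ memF n v = u) := by decide

/-- `Dist(PX(4,3)) = 2` and `ρ(PX(4,3)) = 3 = ⌈4/3⌉ + 1`. -/
theorem dist_cost_PX_four_three :
    distNum (PX 4 3) = 2 ∧ cost2 (PX 4 3) = 3 ∧ (4 + 3 - 1) / 3 + 1 = 3 := by
  classical
  refine ⟨?_, ?_, by norm_num⟩
  · show sInf {d | ∃ c : V4 → Fin d, IsDistinguishing (PX 4 3) c} = 2
    have h2 : 2 ∈ {d | ∃ c : V4 → Fin d, IsDistinguishing (PX 4 3) c} := by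
      refine ⟨fun v => if v ∈ Rset then 0 else 1, ?_⟩
      intro φ hc
      apply rigid
      have himg : ∀ v ∈ Rset, φ v ∈ Rset := by
        intro v hv
        by_contra h
        have hv' := hc v
        beta_reduce at hv'
        rw [if_neg h, if_pos hv] at hv'
        exact absurd hv' (by decide)
      have himg' : ∀ v, φ v ∈ Rset → v ∈ Rset := by
        intro v hv
        by_contra h
        have hv' := hc v
        beta_reduce at hv'
        rw [if_pos hv, if_neg h] at hv'
        exact absurd hv' (by decide)
      apply Set.eq_of_subset_of_subset
      · rintro _ ⟨v, hv, rfl⟩; exact himg v hv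
      · intro z hz
        refine ⟨φ.symm z, ?_, φ.apply_symm_apply z⟩
        apply himg'
        rw [φ.apply_symm_apply]; exact hz
    have hlb : ∀ d ∈ {d | ∃ c : V4 → Fin d, IsDistinguishing (PX 4 3) c}, 2 ≤ d := by
      rintro d ⟨c, hdist⟩
      by_contra hlt
      push_neg at hlt
      interval_cases d
      · exact (c ((0 : ZMod 4), ![0,0,0])).elim0
      · have h1 := hdist rotIso1 (fun v => Subsingleton.elim _ _) ((0 : ZMod 4), ![0,0,0])
        have h2 : rotF1 ((0 : ZMod 4), ![0,0,0]) = ((0 : ZMod 4), ![0,0,0]) := h1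
        exact absurd h2 (by decide)
    exact le_antisymm (Nat.sInf_le h2) (le_csInf ⟨2, h2⟩ hlb)
  · show sInf {m | ∃ R : Set V4, R.ncard = m ∧
      ∀ φ : PX 4 3 ≃g PX 4 3, ⇑φ '' R = R → ∀ v, φ v = v} = 3
    have h3 : 3 ∈ {m | ∃ R : Set V4, R.ncard = m ∧
        ∀ φ : PX 4 3 ≃g PX 4 3, ⇑φ '' R = R → ∀ v, φ v = v} := by
      refine ⟨Rset, ?_, rigid⟩
      rw [Set.ncard_eq_three]
      exact ⟨_, _, _, by decide, by decide, by decide, rfl⟩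
    have hlb : ∀ m ∈ {m | ∃ R : Set V4, R.ncard = m ∧
        ∀ φ : PX 4 3 ≃g PX 4 3, ⇑φ '' R = R → ∀ v, φ v = v}, 3 ≤ m := by
      rintro m ⟨R, hcard, hrig⟩
      by_contra hlt
      push_neg at hlt
      interval_cases m
      · have hR : R = ∅ := (Set.ncard_eq_zero R.toFinite).mp hcard
        obtain ⟨w, hw⟩ := mem_nontrivial 0
        have hid := hrig (memIso 0) (by rw [hR, Set.image_empty]) w
        rw [memIso_coe] at hid
        exact hw hid
      · obtain ⟨u, hu⟩ := Set.ncard_eq_one.mp hcard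
        obtain ⟨n, hn⟩ := mem_cover u u
        obtain ⟨w, hw⟩ := mem_nontrivial n
        have hfix : memF n u = u := by rcases hn with ⟨h,_⟩|⟨h,_⟩ <;> exact h
        have himg : ⇑(memIso n) '' R = R := by
          rw [hu, Set.image_singleton, memIso_coe, hfix]
        have hid := hrig (memIso n) himg w
        rw [memIso_coe] at hid
        exact hw hid
      · obtain ⟨u, v, huv, hR⟩ := Set.ncard_eq_two.mp hcard
        obtain ⟨n, hn⟩ := mem_cover u v
        obtain ⟨w, hw⟩ := mem_nontrivial n
        have himg : ⇑(memIso n) '' R = R := by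
          rw [hR, Set.image_pair]
          rcases hn with ⟨h1, h2⟩ | ⟨h1, h2⟩
          · rw [memIso_coe, memIso_coe, h1, h2]
          · rw [memIso_coe, memIso_coe, h1, h2, Set.pair_comm]
        have hid := hrig (memIso n) himg w
        rw [memIso_coe] at hid
        exact hw hid
    exact le_antisymm (Nat.sInf_le h3) (le_csInf ⟨3, h3⟩ hlb)
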